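/- For every n ≥ 6, X_{n−1} < Σ_{j=2}^{n−2} (j−1)·X_j·X_{n−j} < 2·X_{n−1}. -/

import Mathlib

/-!
Write `X_n = 2(n-1) X_{n-1} + S_n`, and split off the two boundary terms `j = 2, n-2` of `S_n`:
`S_n = 2(n-2) X_{n-2} + I_n` with `I_n = ∑_{j=3}^{n-3} (j-1) X_j X_{n-j}`.

Lower bound: since `X_{m+1} ≥ 2m X_m ≥ 4 X_m`, comparing `I_{n}` with `I_{n-1}` termwise gives
`I_n ≥ 4 I_{n-1} + 8(n-4) X_{n-3} > S_{n-1}`, i.e. `S_n > X_{n-1}`.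

Upper bound, by strong induction: `S_m ≤ 2 X_{m-1}` for `m < n` means `X_{i+1} ≤ 2(i+1) X_i`
below `n`. Together with `X_{k+1} ≥ 2k X_k` this makes `X_j X_{n-j}` decrease as `j` moves from
`3` towards `n/2`, so `I_n ≤ 8 X_{n-3} ∑_{j=3}^{n-3} (j-1) < 2(n-2) X_{n-2}`, i.e. `S_n < 2 X_{n-1}`.
-/

/-- The sequence `X_n` counting equivalence classes of circular planar electrical networks:
`X_1 = 1` and, for `n ≥ 2`,
`X_n = 2(n-1) X_{n-1} + ∑_{j=2}^{n-2} (j-1) X_j X_{n-j}` (the sum being empty for `n ≤ 3`;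
here it is written over the attached index set to establish termination). -/
def X : ℕ → ℕ
  | 0 => 1
  | 1 => 1
  | n + 2 =>
      2 * (n + 1) * X (n + 1) +
        ∑ j ∈ (Finset.Icc 2 n).attach, (j.1 - 1) * X j.1 * X (n + 2 - j.1)
decreasing_by
  · exact Nat.lt_succ_self (n + 1)
  · have := j.2; rw [Finset.mem_Icc] at this; omega
  · have := j.2; rw [Finset.mem_Icc] at this; omega

open Finset

def S (n : ℕ) : ℕ := ∑ j ∈ Icc 2 (n - 2), (j - 1) * X j * X (n - j)

def innerSum (n : ℕ) : ℕ := ∑ j ∈ Icc 3 (n - 3), (j - 1) * X j * X (n - j)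

lemma X_zero : X 0 = 1 := by rw [X]

lemma X_one : X 1 = 1 := by rw [X]

lemma X_add_two (n : ℕ) : X (n + 2) = 2 * (n + 1) * X (n + 1) + S (n + 2) := by
  rw [X, S, Nat.add_sub_cancel, sum_attach (Icc 2 n) fun j => (j - 1) * X j * X (n + 2 - j)]

lemma X_two : X 2 = 2 := by simp [X_add_two 0, S, X_one]
lemma X_three : X 3 = 8 := by simp [X_add_two 1, S, X_two]
lemma X_four : X 4 = 52 := by simp [X_add_two 2, S, X_three, X_two]
lemma X_five : X 5 = 464 := by
  simp [X_add_two 3, S, X_four, X_three, X_two, sum_Icc_succ_top]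

lemma X_pos : ∀ n, 0 < X n
  | 0 => by simp [X_zero]
  | 1 => by simp [X_one]
  | m + 2 => by
    have := X_pos (m + 1)
    rw [X_add_two]
    positivity

lemma two_mul_X_le (n : ℕ) : 2 * n * X n ≤ X (n + 1) := by
  cases n with
  | zero => simp
  | succ m => rw [X_add_two]; exact Nat.le_add_right _ _

lemma four_mul_X_le {n : ℕ} (hn : 2 ≤ n) : 4 * X n ≤ X (n + 1) :=
  le_trans (Nat.mul_le_mul_right _ (by omega)) (two_mul_X_le n)

lemma S_eq {n : ℕ} (hn : 5 ≤ n) : S n = 2 * (n - 2) * X (n - 2) + innerSum n := by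
  obtain ⟨a, rfl⟩ : ∃ a, n = a + 5 := ⟨n - 5, by omega⟩
  rw [S, innerSum, show a + 5 - 2 = a + 2 + 1 by omega, sum_Icc_succ_top (by omega),
    Icc_eq_cons_Ioc (by omega), sum_cons, ← Icc_add_one_left_eq_Ioc,
    show a + 5 - (a + 2 + 1) = 2 by omega, show a + 5 - 3 = a + 2 by omega,
    show a + 5 - 2 = a + 2 + 1 by omega, Nat.add_sub_cancel, X_two]
  ring_nf

lemma four_mul_innerSum_add_le {n : ℕ} (hn : 5 ≤ n) :
    4 * innerSum n + 8 * (n - 3) * X (n - 2) ≤ innerSum (n + 1) := by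
  obtain ⟨a, rfl⟩ : ∃ a, n = a + 5 := ⟨n - 5, by omega⟩
  rw [innerSum, innerSum, show a + 5 + 1 - 3 = a + 2 + 1 by omega, sum_Icc_succ_top (by omega),
    show a + 5 + 1 - (a + 2 + 1) = 3 by omega, X_three, mul_sum,
    show a + 5 - 3 = a + 2 by omega, show a + 5 - 2 = a + 2 + 1 by omega]
  refine add_le_add (sum_le_sum fun j hj => ?_) (le_of_eq (by rw [Nat.add_sub_cancel]; ring))
  have hj := mem_Icc.mp hj
  calc 4 * ((j - 1) * X j * X (a + 5 - j)) = (j - 1) * X j * (4 * X (a + 5 - j)) := by ring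
    _ ≤ (j - 1) * X j * X (a + 5 - j + 1) := Nat.mul_le_mul_left _ (four_mul_X_le (by omega))
    _ = (j - 1) * X j * X (a + 5 + 1 - j) := by rw [show a + 5 - j + 1 = a + 5 + 1 - j by omega]

lemma X_pred_lt_S {n : ℕ} (hn : 6 ≤ n) : X (n - 1) < S n := by
  obtain ⟨a, rfl⟩ : ∃ a, n = a + 6 := ⟨n - 6, by omega⟩
  have hS_pred : S (a + 5) < innerSum (a + 6) := by
    have hS := S_eq (n := a + 5) (by omega)
    have hinner := four_mul_innerSum_add_le (n := a + 5) (by omega)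
    have hpos := X_pos (a + 3)
    simp only [show a + 5 - 2 = a + 3 by omega, show a + 5 - 3 = a + 2 by omega] at hS hinner
    nlinarith
  rw [show a + 6 - 1 = a + 3 + 2 from rfl, X_add_two, S_eq (n := a + 6) (by omega)]
  exact Nat.add_lt_add_left hS_pred _

lemma mul_le_mul_of_ratio_le {x x' y y' a b : ℕ} (hx : x' ≤ a * x) (hy : b * y ≤ y')
    (hab : a ≤ b) (hb : 0 < b) : x' * y ≤ x * y' :=
  Nat.le_of_mul_le_mul_left (c := b) (calc
    b * (x' * y) = x' * (b * y) := by ring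
    _ ≤ (a * x) * y' := Nat.mul_le_mul hx hy
    _ ≤ (b * x) * y' := Nat.mul_le_mul_right _ (Nat.mul_le_mul_right _ hab)
    _ = b * (x * y') := by ring) hb

lemma sum_Icc_sub_one_mul_two_le (a m : ℕ) : (∑ j ∈ Icc a m, (j - 1)) * 2 ≤ m * (m - 1) := by
  calc (∑ j ∈ Icc a m, (j - 1)) * 2 ≤ (∑ j ∈ range (m + 1), (j - 1)) * 2 := by
        gcongr
        · exact fun j hj => by simp only [mem_Icc, mem_range] at hj ⊢; omega
    _ = m * (m - 1) := by simp only [sum_range_succ', add_tsub_cancel_right, zero_tsub, add_zero,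
        sum_range_id_mul_two]

section RatioBound

variable {n : ℕ} (hratio : ∀ i, 2 * (i + 1) ≤ n → X (i + 1) ≤ 2 * (i + 1) * X i)
include hratio

lemma X_mul_X_le_of_two_mul_le {j : ℕ} (hj : 3 ≤ j) (hjn : 2 * j ≤ n) :
    X j * X (n - j) ≤ X 3 * X (n - 3) := by
  induction j, hj using Nat.le_induction with
  | base => rfl
  | succ j hj ih =>
    refine le_trans ?_ (ih (by omega))
    rw [show n - j = n - (j + 1) + 1 by omega]
    exact mul_le_mul_of_ratio_le (hratio j hjn) (two_mul_X_le _) (by omega) (by omega)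

lemma X_mul_X_le {j : ℕ} (hj : 3 ≤ j) (hjn : j + 3 ≤ n) :
    X j * X (n - j) ≤ X 3 * X (n - 3) := by
  rcases le_total (2 * j) n with h | h
  · exact X_mul_X_le_of_two_mul_le hratio hj h
  · have := X_mul_X_le_of_two_mul_le hratio (j := n - j) (by omega) (by omega)
    rwa [Nat.sub_sub_self (by omega), mul_comm] at this

lemma innerSum_lt (hn : 6 ≤ n) : innerSum n < 2 * (n - 2) * X (n - 2) := by
  have hbound : innerSum n ≤ (∑ j ∈ Icc 3 (n - 3), (j - 1)) * (X 3 * X (n - 3)) := by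
    rw [innerSum, sum_mul]
    refine sum_le_sum fun j hj => ?_
    rw [mul_assoc]
    exact Nat.mul_le_mul_left _ (X_mul_X_le hratio (mem_Icc.mp hj).1 (by grind))
  have hgauss := sum_Icc_sub_one_mul_two_le 3 (n - 3)
  have hX := two_mul_X_le (n - 3)
  have hpos := X_pos (n - 2)
  rw [X_three] at hbound
  rw [show n - 3 + 1 = n - 2 by omega] at hX
  obtain ⟨a, rfl⟩ : ∃ a, n = a + 6 := ⟨n - 6, by omega⟩
  simp only [show a + 6 - 3 = a + 3 by omega, show a + 6 - 2 = a + 4 by omega,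
    show a + 3 - 1 = a + 2 by omega] at *
  nlinarith

lemma S_lt_of_X_succ_le (hn : 6 ≤ n) : S n < 2 * X (n - 1) := by
  have hX := two_mul_X_le (n - 2)
  rw [show n - 2 + 1 = n - 1 by omega] at hX
  rw [S_eq (by omega)]
  have := innerSum_lt hratio hn
  nlinarith

end RatioBound

lemma X_succ_le (n : ℕ) : X (n + 1) ≤ 2 * (n + 1) * X n := by
  induction n using Nat.strong_induction_on with
  | _ n ih =>
    rcases lt_or_ge n 5 with h | h
    · interval_cases n <;> simp [X_zero, X_one, X_two, X_three, X_four, X_five]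
    · obtain ⟨m, rfl⟩ : ∃ m, n = m + 1 := ⟨n - 1, by omega⟩
      have hS := S_lt_of_X_succ_le (n := m + 2) (fun i hi => ih i (by omega)) (by omega)
      rw [show m + 2 - 1 = m + 1 from rfl] at hS
      rw [X_add_two]
      linarith

/-- For every `n ≥ 6`,
`X_{n-1} < ∑_{j=2}^{n-2} (j-1) X_j X_{n-j} < 2 X_{n-1}`. -/
theorem sum_bounds (n : ℕ) (hn : 6 ≤ n) :
    X (n - 1) < ∑ j ∈ Finset.Icc 2 (n - 2), (j - 1) * X j * X (n - j) ∧
      ∑ j ∈ Finset.Icc 2 (n - 2), (j - 1) * X j * X (n - j) < 2 * X (n - 1) :=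
  ⟨X_pred_lt_S hn, S_lt_of_X_succ_le (fun i _ => X_succ_le i) hn⟩
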